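/- arXiv:2506.17228 — 13 statements merged into one kernel-verified Lean document; each statement's English description precedes it below -/
import Mathlib

section
/- Let A be a (not necessarily associative) algebra over a field of characteristic zero satisfying the two anti-biderivation identities x·(y∘z) = -((x·y)∘z + y∘(x·z)) and (y∘z)·x = -((y·x)∘z + y∘(z·x)), where x∘y := x·y + y·x. Then the symmetrized product satisfies x∘(y∘z) = -((x∘y)∘z + y∘(x∘z)); in particular, (A,∘) is a Jacobi-Jordan algebra (commutative and satisfying the Jacobi identity x∘(y∘z) + y∘(z∘x) + z∘(x∘y) = 0). -/
/-- Symmetrized product `x ∘ y = x·y + y·x`. -/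
def circ {A : Type*} [Mul A] [Add A] (x y : A) : A := x * y + y * x

theorem circ_comm {A : Type*} [Mul A] [AddCommMagma A] (x y : A) : circ x y = circ y x :=
  add_comm _ _

theorem circ_circ_of_anti_biderivation {A : Type*} [NonUnitalNonAssocRing A]
    (h1 : ∀ x y z : A, x * circ y z = -(circ (x * y) z + circ y (x * z)))
    (h2 : ∀ x y z : A, circ y z * x = -(circ (y * x) z + circ y (z * x))) (x y z : A) :
    circ x (circ y z) = -(circ (circ x y) z + circ y (circ x z)) :=
  calc circ x (circ y z) = x * circ y z + circ y z * x := rfl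
    _ = -(circ (x * y) z + circ y (x * z)) + -(circ (y * x) z + circ y (z * x)) := by
      rw [h1, h2]
    _ = -(circ (circ x y) z + circ y (circ x z)) := by
      simp only [circ, add_mul, mul_add]
      abel

theorem circ_jacobi_of_circ_circ {A : Type*} [Mul A] [AddCommGroup A]
    (hcirc : ∀ x y z : A, circ x (circ y z) = -(circ (circ x y) z + circ y (circ x z)))
    (x y z : A) : circ x (circ y z) + circ y (circ z x) + circ z (circ x y) = 0 := by
  rw [hcirc x y z, circ_comm x z, circ_comm (circ x y) z]
  abel

theorem abd_plus_is_jacobi_jordan_general {A : Type*} [NonUnitalNonAssocRing A]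
    (h1 : ∀ x y z : A, x * circ y z = -(circ (x * y) z + circ y (x * z)))
    (h2 : ∀ x y z : A, circ y z * x = -(circ (y * x) z + circ y (z * x))) :
    (∀ x y z : A, circ x (circ y z) = -(circ (circ x y) z + circ y (circ x z))) ∧
    (∀ x y : A, circ x y = circ y x) ∧
    (∀ x y z : A, circ x (circ y z) + circ y (circ z x) + circ z (circ x y) = 0) :=
  have hcirc := circ_circ_of_anti_biderivation h1 h2
  ⟨hcirc, circ_comm, circ_jacobi_of_circ_circ hcirc⟩

/-- In an ABD-algebra over a field of characteristic zero, the symmetrized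
product satisfies `x∘(y∘z) = -((x∘y)∘z + y∘(x∘z))`; in particular `(A,∘)` is
commutative and satisfies the Jacobi identity (Jacobi-Jordan algebra). -/
theorem abd_plus_is_jacobi_jordan {K A : Type*} [Field K] [CharZero K]
    [NonUnitalNonAssocRing A] [Module K A] [SMulCommClass K A A] [IsScalarTower K A A]
    (h1 : ∀ x y z : A, x * circ y z = -(circ (x * y) z + circ y (x * z)))
    (h2 : ∀ x y z : A, circ y z * x = -(circ (y * x) z + circ y (z * x))) :
    (∀ x y z : A, circ x (circ y z) = -(circ (circ x y) z + circ y (circ x z))) ∧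
    (∀ x y : A, circ x y = circ y x) ∧
    (∀ x y z : A, circ x (circ y z) + circ y (circ z x) + circ z (circ x y) = 0) :=
  abd_plus_is_jacobi_jordan_general h1 h2
end

section
/- Let A be an ABD-algebra over a field of characteristic zero (i.e., satisfying x·(y∘z) = -((x·y)∘z + y∘(x·z)) and (y∘z)·x = -((y·x)∘z + y∘(z·x)) where x∘y = x·y + y·x). Then every element x of A satisfies x·(x·x) = 0 and (x·x)·x = 0. -/
theorem eq_zero_and_eq_zero_of_two_nsmul_add {M : Type*} [AddCommGroup M] [IsAddTorsionFree M]
    {a b : M} (hab : 2 • a + b = 0) (hba : a + 2 • b = 0) : a = 0 ∧ b = 0 := by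
  have ha : 3 • a = 0 := by
    calc 3 • a = 2 • (2 • a + b) - (a + 2 • b) := by abel
      _ = 0 := by rw [hab, hba, nsmul_zero, sub_zero]
  have ha0 : a = 0 := (nsmul_eq_zero_iff_right three_ne_zero).mp ha
  have hb : b = -(2 • a) := eq_neg_of_add_eq_zero_right hab
  exact ⟨ha0, by rw [hb, ha0, nsmul_zero, neg_zero]⟩

section ABD

variable {A : Type*} [NonUnitalNonAssocRing A] [IsAddTorsionFree A]

theorem two_nsmul_mul_mul_self_add_mul_self_mul_eq_zero
    (h1 : ∀ x y z : A, x * circ y z = -(circ (x * y) z + circ y (x * z))) (x : A) :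
    2 • (x * (x * x)) + x * x * x = 0 := by
  have h := h1 x x x
  simp only [circ, mul_add] at h
  refine (nsmul_eq_zero_iff_right two_ne_zero).mp ?_
  calc 2 • (2 • (x * (x * x)) + x * x * x)
        = (x * (x * x) + x * (x * x)) + (x * x * x + x * (x * x) + (x * (x * x) + x * x * x)) := by
          abel
    _ = 0 := by rw [h, neg_add_cancel]

theorem mul_mul_self_add_two_nsmul_mul_self_mul_eq_zero
    (h2 : ∀ x y z : A, circ y z * x = -(circ (y * x) z + circ y (z * x))) (x : A) :
    x * (x * x) + 2 • (x * x * x) = 0 := by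
  have h := h2 x x x
  simp only [circ, add_mul] at h
  refine (nsmul_eq_zero_iff_right two_ne_zero).mp ?_
  calc 2 • (x * (x * x) + 2 • (x * x * x))
        = (x * x * x + x * x * x) + (x * x * x + x * (x * x) + (x * (x * x) + x * x * x)) := by
          abel
    _ = 0 := by rw [h, neg_add_cancel]

end ABD

theorem abd_nilindex_three_general {K A : Type*} [Field K] [CharZero K]
    [NonUnitalNonAssocRing A] [Module K A]
    (h1 : ∀ x y z : A, x * circ y z = -(circ (x * y) z + circ y (x * z)))
    (h2 : ∀ x y z : A, circ y z * x = -(circ (y * x) z + circ y (z * x))) :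
    ∀ x : A, x * (x * x) = 0 ∧ (x * x) * x = 0 := by
  have : IsAddTorsionFree A := .of_isTorsionFree K A
  intro x
  exact eq_zero_and_eq_zero_of_two_nsmul_add
    (two_nsmul_mul_mul_self_add_mul_self_mul_eq_zero h1 x)
    (mul_mul_self_add_two_nsmul_mul_self_mul_eq_zero h2 x)

/-- Every ABD-algebra over a field of characteristic zero is a nilalgebra of
nilindex 3: `x·(x·x) = 0` and `(x·x)·x = 0`. -/
theorem abd_nilindex_three {K A : Type*} [Field K] [CharZero K]
    [NonUnitalNonAssocRing A] [Module K A] [SMulCommClass K A A] [IsScalarTower K A A]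
    (h1 : ∀ x y z : A, x * circ y z = -(circ (x * y) z + circ y (x * z)))
    (h2 : ∀ x y z : A, circ y z * x = -(circ (y * x) z + circ y (z * x))) :
    ∀ x : A, x * (x * x) = 0 ∧ (x * x) * x = 0 :=
  abd_nilindex_three_general (K := K) h1 h2
end

section
/- Let A be an ABD-algebra over a field of characteristic zero. Then ((x·x)·x)·x = 0 and (x·x)·(x·x) = 0 for every x in A. -/
structure IsABD (A : Type*) [NonUnitalNonAssocRing A] : Prop where
  mul_circ : ∀ x y z : A, x * circ y z = -(circ (x * y) z + circ y (x * z))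
  circ_mul : ∀ x y z : A, circ y z * x = -(circ (y * x) z + circ y (z * x))

theorem eq_zero_of_four_nsmul_add_two_nsmul {M : Type*} [AddCommGroup M] [IsAddTorsionFree M]
    {a b : M} (h : 4 • a + 2 • b = 0) (h' : 4 • b + 2 • a = 0) : a = 0 := by
  have h6 : 6 • a = 2 • (4 • a + 2 • b) - (4 • b + 2 • a) := by abel
  rw [h, h', nsmul_zero, sub_zero, nsmul_eq_zero_iff] at h6
  simpa using h6

namespace IsABD

variable {A : Type*} [NonUnitalNonAssocRing A] (hA : IsABD A) (x : A)
include hA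

theorem four_nsmul_mul_mul_self_add : 4 • (x * (x * x)) + 2 • (x * x * x) = 0 := by
  have h := hA.mul_circ x x x
  simp only [circ, mul_add] at h
  rw [← eq_neg_iff_add_eq_zero.mp h]
  abel

theorem four_nsmul_mul_self_mul_add : 4 • (x * x * x) + 2 • (x * (x * x)) = 0 := by
  have h := hA.circ_mul x x x
  simp only [circ, add_mul] at h
  rw [← eq_neg_iff_add_eq_zero.mp h]
  abel

variable [IsAddTorsionFree A]

theorem mul_mul_self_eq_zero : x * (x * x) = 0 :=
  eq_zero_of_four_nsmul_add_two_nsmul (hA.four_nsmul_mul_mul_self_add x)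
    (hA.four_nsmul_mul_self_mul_add x)

theorem mul_self_mul_eq_zero : x * x * x = 0 :=
  eq_zero_of_four_nsmul_add_two_nsmul (hA.four_nsmul_mul_self_mul_add x)
    (hA.four_nsmul_mul_mul_self_add x)

theorem mul_self_mul_mul_self_eq_zero : x * x * (x * x) = 0 := by
  have h := hA.mul_circ (x * x) x x
  simp only [circ, mul_add, hA.mul_self_mul_eq_zero x, zero_mul, mul_zero, add_zero,
    neg_zero] at h
  rw [← two_nsmul, nsmul_eq_zero_iff] at h
  simpa using h

end IsABD

theorem abd_fourth_powers_vanish_general {K A : Type*} [Field K] [CharZero K]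
    [NonUnitalNonAssocRing A] [Module K A]
    (h1 : ∀ x y z : A, x * circ y z = -(circ (x * y) z + circ y (x * z)))
    (h2 : ∀ x y z : A, circ y z * x = -(circ (y * x) z + circ y (z * x))) :
    ∀ x : A, ((x * x) * x) * x = 0 ∧ (x * x) * (x * x) = 0 := by
  have : IsAddTorsionFree A := .of_isTorsionFree K A
  have hA : IsABD A := ⟨h1, h2⟩
  intro x
  exact ⟨by rw [hA.mul_self_mul_eq_zero, zero_mul], hA.mul_self_mul_mul_self_eq_zero x⟩

/-- In an ABD-algebra over a field of characteristic zero,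
`((x·x)·x)·x = 0` and `(x·x)·(x·x) = 0` for every `x`. -/
theorem abd_fourth_powers_vanish {K A : Type*} [Field K] [CharZero K]
    [NonUnitalNonAssocRing A] [Module K A] [SMulCommClass K A A] [IsScalarTower K A A]
    (h1 : ∀ x y z : A, x * circ y z = -(circ (x * y) z + circ y (x * z)))
    (h2 : ∀ x y z : A, circ y z * x = -(circ (y * x) z + circ y (z * x))) :
    ∀ x : A, ((x * x) * x) * x = 0 ∧ (x * x) * (x * x) = 0 :=
  abd_fourth_powers_vanish_general (K := K) h1 h2
end

section
/- Let A be an associative algebra over a field of characteristic zero. Then A is an ABD-algebra (satisfies x·(y∘z) = -((x·y)∘z + y∘(x·z)) and (y∘z)·x = -((y·x)∘z + y∘(z·x)) with x∘y = xy+yx) if and only if x³ = 0 for all x and [x, y∘z] = 0 for all x,y,z, where [a,b] = ab - ba. -/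
/-!
Modulo the full symmetrization `S(x,y,z)` of the triple product, the two ABD identities at
`(x,y,z)` read `S + [x, y∘z] = 0` and `S - [x, y∘z] = 0`. Dividing by `2` they amount to
`S = 0` and `[x, y∘z] = 0`; and `S` vanishes identically iff all cubes do, by polarization one
way and `S(x,x,x) = 6x³` the other way.
-/

theorem add_eq_zero_and_sub_eq_zero_iff {G : Type*} [AddCommGroup G] [IsAddTorsionFree G]
    {a b : G} : a + b = 0 ∧ a - b = 0 ↔ a = 0 ∧ b = 0 := by
  refine ⟨fun ⟨hadd, hsub⟩ => ?_, fun ⟨ha, hb⟩ => by simp [ha, hb]⟩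
  have ha : a = 0 := by
    rw [← two_nsmul_eq_zero, two_nsmul]
    calc a + a = (a + b) + (a - b) := by abel
      _ = 0 := by rw [hadd, hsub, add_zero]
  exact ⟨ha, by simpa [ha] using hadd⟩

section NonUnitalRing

variable {A : Type*} [NonUnitalRing A]

def symmProd3 (x y z : A) : A :=
  x * y * z + x * z * y + y * x * z + y * z * x + z * x * y + z * y * x

theorem symmProd3_self (x : A) : symmProd3 x x x = 6 • (x * x * x) := by
  simp only [symmProd3]; noncomm_ring

theorem symmProd3_eq_cubes (x y z : A) :
    symmProd3 x y z = (x + y + z) * (x + y + z) * (x + y + z)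
      - (x + y) * (x + y) * (x + y) - (x + z) * (x + z) * (x + z) - (y + z) * (y + z) * (y + z)
      + x * x * x + y * y * y + z * z * z := by
  simp only [symmProd3]; noncomm_ring

theorem forall_cube_eq_zero_iff_forall_symmProd3_eq_zero [IsAddTorsionFree A] :
    (∀ x : A, x * x * x = 0) ↔ ∀ x y z : A, symmProd3 x y z = 0 := by
  refine ⟨fun h x y z => by simp [symmProd3_eq_cubes, h], fun h x => ?_⟩
  rw [← nsmul_eq_zero_iff_right (by norm_num : 6 ≠ 0), ← symmProd3_self, h]

theorem mul_circ_eq_neg_iff (x y z : A) :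
    x * circ y z = -(circ (x * y) z + circ y (x * z)) ↔
      symmProd3 x y z + (x * circ y z - circ y z * x) = 0 := by
  rw [eq_neg_iff_add_eq_zero]
  convert Iff.rfl using 2
  simp only [symmProd3, circ]; noncomm_ring

theorem circ_mul_eq_neg_iff (x y z : A) :
    circ y z * x = -(circ (y * x) z + circ y (z * x)) ↔
      symmProd3 x y z - (x * circ y z - circ y z * x) = 0 := by
  rw [eq_neg_iff_add_eq_zero]
  convert Iff.rfl using 2
  simp only [symmProd3, circ]; noncomm_ring

end NonUnitalRing

theorem assoc_abd_iff_general {K A : Type*} [Field K] [CharZero K]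
    [NonUnitalRing A] [Module K A] :
    ((∀ x y z : A, x * circ y z = -(circ (x * y) z + circ y (x * z))) ∧
     (∀ x y z : A, circ y z * x = -(circ (y * x) z + circ y (z * x)))) ↔
    ((∀ x : A, x * x * x = 0) ∧ (∀ x y z : A, x * circ y z - circ y z * x = 0)) := by
  have : IsAddTorsionFree A := .of_isTorsionFree K A
  simp only [mul_circ_eq_neg_iff, circ_mul_eq_neg_iff, ← forall_and,
    add_eq_zero_and_sub_eq_zero_iff, forall_cube_eq_zero_iff_forall_symmProd3_eq_zero]

/-- An associative algebra over a field of characteristic zero is an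
ABD-algebra if and only if `x³ = 0` for all `x` and `[x, y∘z] = 0` for all
`x, y, z`. -/
theorem assoc_abd_iff {K A : Type*} [Field K] [CharZero K]
    [NonUnitalRing A] [Module K A] [SMulCommClass K A A] [IsScalarTower K A A] :
    ((∀ x y z : A, x * circ y z = -(circ (x * y) z + circ y (x * z))) ∧
     (∀ x y z : A, circ y z * x = -(circ (y * x) z + circ y (z * x)))) ↔
    ((∀ x : A, x * x * x = 0) ∧ (∀ x y z : A, x * circ y z - circ y z * x = 0)) :=
  assoc_abd_iff_general (K := K)
end

section
/- Let A be a nonassociative algebra over a field of characteristic zero such that the linearized nilindex-3 condition holds: x·(y·z)+y·(x·z)+x·(z·y)+z·(x·y)+z·(y·x)+y·(z·x) + (x·y)·z+(y·x)·z+(x·z)·y+(z·x)·y+(z·y)·x+(y·z)·x = 0 (equivalently, A is a nilalgebra with nilindex 3 in the Jacobi-Jordan-admissible sense). Then A is an ABD-algebra if and only if (x·y)·z + (x·z)·y = z·(y·x) + y·(z·x) for all x,y,z (i.e., L_y L_z = R_y R_z as operators summed symmetrically). -/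
section ABD

variable (A : Type*) [NonUnitalNonAssocRing A]

def LinearizedNil3 : Prop :=
  ∀ x y z : A,
    x * (y * z) + y * (x * z) + x * (z * y) + z * (x * y) + z * (y * x) + y * (z * x) +
      ((x * y) * z + (y * x) * z + (x * z) * y + (z * x) * y + (z * y) * x + (y * z) * x) = 0

def ABDLeft : Prop := ∀ x y z : A, x * circ y z = -(circ (x * y) z + circ y (x * z))

def ABDRight : Prop := ∀ x y z : A, circ y z * x = -(circ (y * x) z + circ y (z * x))

/-- `R_y R_z + R_z R_y = L_y L_z + L_z L_y`. -/
def RightMulCircEqLeftMulCirc : Prop :=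
  ∀ x y z : A, (x * y) * z + (x * z) * y = z * (y * x) + y * (z * x)

variable {A}

theorem LinearizedNil3.rightMulCircEqLeftMulCirc_of_abdLeft (hnil : LinearizedNil3 A)
    (habd : ABDLeft A) : RightMulCircEqLeftMulCirc A := by
  intro x y z
  have hyxz := habd y x z
  have hzxy := habd z x y
  simp only [circ, mul_add] at hyxz hzxy
  linear_combination (norm := abel) hnil x y z - hyxz - hzxy

theorem LinearizedNil3.two_nsmul_abdLeft_defect (hnil : LinearizedNil3 A)
    (hs : RightMulCircEqLeftMulCirc A) (x y z : A) :
    2 • (x * circ y z + (circ (x * y) z + circ y (x * z))) = 0 := by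
  simp only [circ, mul_add, two_nsmul]
  linear_combination (norm := abel) hnil x y z + hs x y z - hs y x z - hs z x y

theorem LinearizedNil3.two_nsmul_abdRight_defect (hnil : LinearizedNil3 A)
    (hs : RightMulCircEqLeftMulCirc A) (x y z : A) :
    2 • (circ y z * x + (circ (y * x) z + circ y (z * x))) = 0 := by
  simp only [circ, add_mul, two_nsmul]
  linear_combination (norm := abel) hnil x y z - hs x y z + hs y x z + hs z x y

variable [IsAddTorsionFree A]

theorem LinearizedNil3.abdLeft (hnil : LinearizedNil3 A) (hs : RightMulCircEqLeftMulCirc A) :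
    ABDLeft A := fun x y z =>
  eq_neg_of_add_eq_zero_left (two_nsmul_eq_zero.mp (hnil.two_nsmul_abdLeft_defect hs x y z))

theorem LinearizedNil3.abdRight (hnil : LinearizedNil3 A) (hs : RightMulCircEqLeftMulCirc A) :
    ABDRight A := fun x y z =>
  eq_neg_of_add_eq_zero_left (two_nsmul_eq_zero.mp (hnil.two_nsmul_abdRight_defect hs x y z))

end ABD

theorem nil3_abd_iff_general {K A : Type*} [Field K] [CharZero K]
    [NonUnitalNonAssocRing A] [Module K A]
    (hnil : ∀ x y z : A,
      x * (y * z) + y * (x * z) + x * (z * y) + z * (x * y) + z * (y * x) + y * (z * x) +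
      ((x * y) * z + (y * x) * z + (x * z) * y + (z * x) * y + (z * y) * x + (y * z) * x) = 0) :
    ((∀ x y z : A, x * circ y z = -(circ (x * y) z + circ y (x * z))) ∧
     (∀ x y z : A, circ y z * x = -(circ (y * x) z + circ y (z * x)))) ↔
    (∀ x y z : A, (x * y) * z + (x * z) * y = z * (y * x) + y * (z * x)) := by
  have hnil : LinearizedNil3 A := hnil
  have : IsAddTorsionFree A := .of_isTorsionFree K A
  exact ⟨fun habd => hnil.rightMulCircEqLeftMulCirc_of_abdLeft habd.1,
    fun hs => ⟨hnil.abdLeft hs, hnil.abdRight hs⟩⟩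

/-- For an algebra over a field of characteristic zero satisfying the
linearization of `x³ = 0` (nilindex 3 in the Jacobi-Jordan-admissible sense),
the ABD identities hold if and only if `(x·y)·z + (x·z)·y = z·(y·x) + y·(z·x)`
for all `x, y, z`. -/
theorem nil3_abd_iff {K A : Type*} [Field K] [CharZero K]
    [NonUnitalNonAssocRing A] [Module K A] [SMulCommClass K A A] [IsScalarTower K A A]
    (hnil : ∀ x y z : A,
      x * (y * z) + y * (x * z) + x * (z * y) + z * (x * y) + z * (y * x) + y * (z * x) +
      ((x * y) * z + (y * x) * z + (x * z) * y + (z * x) * y + (z * y) * x + (y * z) * x) = 0) :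
    ((∀ x y z : A, x * circ y z = -(circ (x * y) z + circ y (x * z))) ∧
     (∀ x y z : A, circ y z * x = -(circ (y * x) z + circ y (z * x)))) ↔
    (∀ x y z : A, (x * y) * z + (x * z) * y = z * (y * x) + y * (z * x)) :=
  nil3_abd_iff_general (K := K) hnil
end

section
/- Let A be an ABD-algebra over a field of characteristic zero, and let α, β be scalars. Define a new multiplication x⋆y = α(x·y) + β(y·x) on A. Then (A,⋆) is again an ABD-algebra. -/
/-- Symmetrized product of an arbitrary binary operation. -/
def circOf {A : Type*} [Add A] (m : A → A → A) (x y : A) : A := m x y + m y x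

/-
The mutation `x ⋆ y = α xy + β yx` has symmetrized product `(α + β) (x ∘ y)`, so both sides of
each ABD identity for `⋆` are `(α + β)` times a combination of the ABD identities for `·`:
`α` times one and `β` times the other.
-/

namespace ABD

variable {K A : Type*} [CommRing K] [NonUnitalNonAssocRing A] [Module K A]

def IsABD (m : A → A → A) : Prop :=
  (∀ x y z : A, m x (circOf m y z) = -(circOf m (m x y) z + circOf m y (m x z))) ∧
    (∀ x y z : A, m (circOf m y z) x = -(circOf m (m y x) z + circOf m y (m z x)))

def mutation (α β : K) (x y : A) : A := α • (x * y) + β • (y * x)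

variable (α β : K)

theorem circOf_mutation (x y : A) :
    circOf (mutation α β) x y = (α + β) • circOf (· * ·) x y := by
  simp only [circOf, mutation]
  module

variable [SMulCommClass K A A] [IsScalarTower K A A]

theorem mutation_smul_right (s : K) (x y : A) :
    mutation α β x (s • y) = s • mutation α β x y := by
  simp only [mutation, mul_smul_comm, smul_mul_assoc]
  module

theorem mutation_smul_left (s : K) (x y : A) :
    mutation α β (s • x) y = s • mutation α β x y := by
  simp only [mutation, mul_smul_comm, smul_mul_assoc]
  module

theorem mutation_circOf_left (h : IsABD (A := A) (· * ·)) (x y z : A) :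
    mutation α β x (circOf (· * ·) y z) =
      -(circOf (· * ·) (mutation α β x y) z + circOf (· * ·) y (mutation α β x z)) := by
  simp only [mutation, h.1, h.2]
  simp only [circOf, mul_add, add_mul, smul_mul_assoc, mul_smul_comm]
  module

theorem mutation_circOf_right (h : IsABD (A := A) (· * ·)) (x y z : A) :
    mutation α β (circOf (· * ·) y z) x =
      -(circOf (· * ·) (mutation α β y x) z + circOf (· * ·) y (mutation α β z x)) := by
  simp only [mutation, h.1, h.2]
  simp only [circOf, mul_add, add_mul, smul_mul_assoc, mul_smul_comm]
  module

theorem IsABD.mutation (h : IsABD (A := A) (· * ·)) : IsABD (mutation α β : A → A → A) := by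
  constructor <;> intro x y z <;>
    simp only [circOf_mutation, mutation_smul_left, mutation_smul_right, mutation_circOf_left α β h,
      mutation_circOf_right α β h, smul_add, smul_neg]

end ABD

theorem mutation_abd_general {K A : Type*} [Field K]
    [NonUnitalNonAssocRing A] [Module K A] [SMulCommClass K A A] [IsScalarTower K A A]
    (h1 : ∀ x y z : A, x * circOf (· * ·) y z =
      -(circOf (· * ·) (x * y) z + circOf (· * ·) y (x * z)))
    (h2 : ∀ x y z : A, circOf (· * ·) y z * x =
      -(circOf (· * ·) (y * x) z + circOf (· * ·) y (z * x)))
    (α β : K) :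
    letI star : A → A → A := fun x y => α • (x * y) + β • (y * x)
    (∀ x y z : A, star x (circOf star y z) =
      -(circOf star (star x y) z + circOf star y (star x z))) ∧
    (∀ x y z : A, star (circOf star y z) x =
      -(circOf star (star y x) z + circOf star y (star z x))) :=
  ABD.IsABD.mutation α β ⟨h1, h2⟩

/-- Any `(α,β)`-mutation of an ABD-algebra over a field of characteristic
zero is again an ABD-algebra. -/
theorem mutation_abd {K A : Type*} [Field K] [CharZero K]
    [NonUnitalNonAssocRing A] [Module K A] [SMulCommClass K A A] [IsScalarTower K A A]
    (h1 : ∀ x y z : A, x * circOf (· * ·) y z =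
      -(circOf (· * ·) (x * y) z + circOf (· * ·) y (x * z)))
    (h2 : ∀ x y z : A, circOf (· * ·) y z * x =
      -(circOf (· * ·) (y * x) z + circOf (· * ·) y (z * x)))
    (α β : K) :
    letI star : A → A → A := fun x y => α • (x * y) + β • (y * x)
    (∀ x y z : A, star x (circOf star y z) =
      -(circOf star (star x y) z + circOf star y (star x z))) ∧
    (∀ x y z : A, star (circOf star y z) x =
      -(circOf star (star y x) z + circOf star y (star z x))) :=
  mutation_abd_general h1 h2 α β
end

section
/- Let A be an algebra satisfying the symmetric pre-Jacobi-Jordan identities A(x,y,z) = -A(y,x,z) and A(x,y,z) = -A(x,z,y), where A(x,y,z) = (x·y)·z + x·(y·z) is the antiassociator, and suppose A is an ABD-algebra, so that additionally (x·y)·z = -(z·y)·x and x·(y·z) = -z·(y·x) hold. Then the symmetrized square is central for the commutator: [x∘y, z] = 0 for all x,y,z, where x∘y = x·y+y·x and [a,b] = a·b - b·a. -/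
/-- Antiassociator `A(x,y,z) = (x·y)·z + x·(y·z)`. -/
def antiassoc {A : Type*} [Mul A] [Add A] (x y z : A) : A := (x * y) * z + x * (y * z)

/-- Commutator `[x,y] = x·y - y·x`. -/
def br {A : Type*} [Mul A] [Sub A] (x y : A) : A := x * y - y * x

/-! Both `(x ∘ y)·z` and `z·(x ∘ y)` equal `-(x·(y·z) + y·(x·z))`: the first by left
antisymmetry of the antiassociator, the second by the identity `x·(y·z) = -z·(y·x)`. -/

section

variable {A : Type*} [NonUnitalNonAssocRing A]

theorem circ_mul_of_antiassoc_swap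
    (hL : ∀ x y z : A, antiassoc x y z = -antiassoc y x z) (x y z : A) :
    circ x y * z = -(x * (y * z) + y * (x * z)) := by
  have h := hL x y z
  simp only [antiassoc] at h
  rw [circ, add_mul]
  linear_combination (norm := abel) h

theorem mul_circ_of_mul_mul_reverse
    (h4 : ∀ x y z : A, x * (y * z) = -(z * (y * x))) (x y z : A) :
    z * circ x y = -(x * (y * z) + y * (x * z)) := by
  rw [circ, mul_add, h4 z x y, h4 z y x]
  abel

end

theorem symm_preJJ_abd_circ_central_general {A : Type*} [NonUnitalNonAssocRing A]
    (hL : ∀ x y z : A, antiassoc x y z = -antiassoc y x z)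
    (h4 : ∀ x y z : A, x * (y * z) = -(z * (y * x))) :
    ∀ x y z : A, br (circ x y) z = 0 := by
  intro x y z
  rw [br, sub_eq_zero, circ_mul_of_antiassoc_swap hL, mul_circ_of_mul_mul_reverse h4]

/-- In a symmetric pre-Jacobi-Jordan ABD-algebra, `(A⁺)² ⊆ Ann(A⁻)`:
the symmetrized square is central for the commutator. -/
theorem symm_preJJ_abd_circ_central {A : Type*} [NonUnitalNonAssocRing A]
    (hL : ∀ x y z : A, antiassoc x y z = -antiassoc y x z)
    (hR : ∀ x y z : A, antiassoc x y z = -antiassoc x z y)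
    (h3 : ∀ x y z : A, (x * y) * z = -((z * y) * x))
    (h4 : ∀ x y z : A, x * (y * z) = -(z * (y * x))) :
    ∀ x y z : A, br (circ x y) z = 0 :=
  symm_preJJ_abd_circ_central_general hL h4
end

section
/- Let A be an algebra over a field of characteristic zero satisfying A(x,y,z) = -A(y,x,z), A(x,y,z) = -A(x,z,y) (symmetric pre-Jacobi-Jordan), (x·y)·z = -(z·y)·x, and x·(y·z) = -z·(y·x). Then (z∘t)∘(x∘y) = 0 for all x,y,z,t, where x∘y = x·y + y·x; i.e., (A,∘) is metabelian. -/
/-!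
Write `L` and `R` for left and right multiplications. Skew-symmetry of the antiassociator in its
first two arguments gives `L (x ∘ y) = -(L x L y + L y L x)`, in its last two
`R (x ∘ y) = -(R y R x + R x R y)`, and `(x·y)·z = -(z·y)·x` turns the latter into the former,
so every `x ∘ y` commutes with everything. For such a `w`, the identity
`A(x,w,y) = -A(w,x,y)` symmetrized in `x, y` collapses to `2·w·(x ∘ y) = 0`, and
`w ∘ (x ∘ y) = 2·w·(x ∘ y)`.
-/

section

variable {A : Type*} [NonUnitalNonAssocRing A]

theorem circ_mul_eq_neg (hL : ∀ x y z : A, antiassoc x y z = -antiassoc y x z) (x y w : A) :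
    circ x y * w = -(x * (y * w) + y * (x * w)) := by
  have h := hL x y w
  simp only [antiassoc, circ] at h ⊢
  rw [eq_neg_iff_add_eq_zero] at h ⊢
  rw [← h, add_mul]
  abel

theorem mul_circ_eq_neg (hR : ∀ x y z : A, antiassoc x y z = -antiassoc x z y) (w x y : A) :
    w * circ x y = -(w * x * y + w * y * x) := by
  have h := hR w x y
  simp only [antiassoc, circ] at h ⊢
  rw [eq_neg_iff_add_eq_zero] at h ⊢
  rw [← h, mul_add]
  abel

theorem commute_circ (hR : ∀ x y z : A, antiassoc x y z = -antiassoc x z y)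
    (h3 : ∀ x y z : A, (x * y) * z = -((z * y) * x)) (x y w : A) :
    Commute (circ x y) w := by
  rw [Commute, SemiconjBy, mul_circ_eq_neg hR, h3 w x y, h3 w y x, circ, add_mul]
  abel

theorem mul_circ_add_self_eq_zero (hL : ∀ x y z : A, antiassoc x y z = -antiassoc y x z)
    (hR : ∀ x y z : A, antiassoc x y z = -antiassoc x z y)
    (h3 : ∀ x y z : A, (x * y) * z = -((z * y) * x)) {w x y : A}
    (hx : Commute w x) (hy : Commute w y) :
    w * circ x y + w * circ x y = 0 := by
  have hxwy := hL x w y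
  have hywx := hL y w x
  simp only [antiassoc, ← hx.eq, ← hy.eq] at hxwy hywx
  have hright := mul_circ_eq_neg hR w x y
  have hleft := circ_mul_eq_neg hL x y w
  rw [(commute_circ hR h3 x y w).eq, ← hx.eq, ← hy.eq] at hleft
  rw [circ, mul_add] at hright hleft ⊢
  linear_combination (norm := abel) 2 • hright + hleft - hxwy - hywx

end

theorem symm_preJJ_abd_metabelian_general {A : Type*} [NonUnitalNonAssocRing A]
    (hL : ∀ x y z : A, antiassoc x y z = -antiassoc y x z)
    (hR : ∀ x y z : A, antiassoc x y z = -antiassoc x z y)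
    (h3 : ∀ x y z : A, (x * y) * z = -((z * y) * x)) :
    ∀ x y z t : A, circ (circ z t) (circ x y) = 0 := by
  intro x y z t
  have hw : ∀ v, Commute (circ z t) v := commute_circ hR h3 z t
  rw [circ, ← (hw (circ x y)).eq]
  exact mul_circ_add_self_eq_zero hL hR h3 (hw x) (hw y)

/-- In a symmetric pre-Jacobi-Jordan ABD-algebra over a field of
characteristic zero, `(A,∘)` is metabelian: `(z∘t)∘(x∘y) = 0`. -/
theorem symm_preJJ_abd_metabelian {K A : Type*} [Field K] [CharZero K]
    [NonUnitalNonAssocRing A] [Module K A] [SMulCommClass K A A] [IsScalarTower K A A]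
    (hL : ∀ x y z : A, antiassoc x y z = -antiassoc y x z)
    (hR : ∀ x y z : A, antiassoc x y z = -antiassoc x z y)
    (h3 : ∀ x y z : A, (x * y) * z = -((z * y) * x))
    (h4 : ∀ x y z : A, x * (y * z) = -(z * (y * x))) :
    ∀ x y z t : A, circ (circ z t) (circ x y) = 0 :=
  symm_preJJ_abd_metabelian_general hL hR h3
end

section
/- Let A be an algebra satisfying (x·y)·z = -(z·y)·x (together with the pre-Jacobi-Jordan ABD hypotheses). Then (x·y)·(z·t) = -(x·z)·(y·t) for all x,y,z,t. -/
/-- In an algebra satisfying `(x·y)·z = -(z·y)·x`, one has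
`(x·y)·(z·t) = -(x·z)·(y·t)`. -/
theorem antimedial {A : Type*} [NonUnitalNonAssocRing A]
    (h3 : ∀ x y z : A, (x * y) * z = -((z * y) * x)) :
    ∀ x y z t : A, (x * y) * (z * t) = -((x * z) * (y * t)) := by
  intro x y z t
  calc (x * y) * (z * t) = -(((z * t) * y) * x) := h3 x y (z * t)
    _ = ((y * t) * z) * x := by rw [h3 z t y, neg_mul, neg_neg]
    _ = -((x * z) * (y * t)) := h3 (y * t) z x
end

section
/- Let A be an antiassociative algebra (i.e., (x·y)·z = -x·(y·z)) over a field of characteristic ≠ 2. Then A is an ABD-algebra if and only if A is flexible, i.e., (x·y)·x = x·(y·x) for all x,y. -/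
theorem eq_zero_of_add_self_eq_zero_of_two_ne_zero {K M : Type*} [Field K] (h2 : (2 : K) ≠ 0)
    [AddCommGroup M] [Module K M] {a : M} (h : a + a = 0) : a = 0 :=
  (smul_eq_zero.mp (by rwa [two_smul])).resolve_left h2

section Antiassociative

variable {A : Type*} [NonUnitalNonAssocRing A]

theorem forall_mul_mul_self_eq_zero_iff {K : Type*} [Field K] (h2 : (2 : K) ≠ 0) [Module K A] :
    (∀ x y : A, x * (y * x) = 0) ↔ ∀ x y z : A, x * (y * z) + z * (y * x) = 0 := by
  constructor
  · intro h x y z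
    have h_sum := h (x + z) y
    simp only [mul_add, add_mul] at h_sum
    linear_combination (norm := abel) h_sum - h x y - h z y
  · intro h x y
    exact eq_zero_of_add_self_eq_zero_of_two_ne_zero h2 (h x y x)

theorem mul_circ_eq_iff (hanti : ∀ x y z : A, x * y * z + x * (y * z) = 0) (x y z : A) :
    x * circ y z = -(circ (x * y) z + circ y (x * z)) ↔ y * (x * z) + z * (x * y) = 0 := by
  simp only [circ, mul_add]
  constructor <;> intro h
  · linear_combination (norm := abel) h - hanti x y z - hanti x z y
  · linear_combination (norm := abel) h + hanti x y z + hanti x z y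

theorem circ_mul_eq_iff (hanti : ∀ x y z : A, x * y * z + x * (y * z) = 0) (x y z : A) :
    circ y z * x = -(circ (y * x) z + circ y (z * x)) ↔ y * (x * z) + z * (x * y) = 0 := by
  simp only [circ, add_mul]
  constructor <;> intro h
  · linear_combination (norm := abel)
      -h + hanti y z x + hanti z y x + hanti y x z + hanti z x y
  · linear_combination (norm := abel)
      -h + hanti y z x + hanti z y x + hanti y x z + hanti z x y

theorem flexible_iff_forall_mul_mul_self_eq_zero {K : Type*} [Field K] (h2 : (2 : K) ≠ 0)
    [Module K A] (hanti : ∀ x y z : A, x * y * z + x * (y * z) = 0) :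
    (∀ x y : A, x * y * x = x * (y * x)) ↔ ∀ x y : A, x * (y * x) = 0 := by
  constructor
  · intro hflex x y
    have h := hanti x y x
    rw [hflex x y] at h
    exact eq_zero_of_add_self_eq_zero_of_two_ne_zero h2 h
  · intro h x y
    rw [h x y, ← neg_eq_of_add_eq_zero_left (hanti x y x), h x y, neg_zero]

end Antiassociative

theorem antiassoc_abd_iff_flexible_general {K A : Type*} [Field K] (h2 : (2 : K) ≠ 0)
    [NonUnitalNonAssocRing A] [Module K A]
    (hanti : ∀ x y z : A, (x * y) * z + x * (y * z) = 0) :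
    ((∀ x y z : A, x * circ y z = -(circ (x * y) z + circ y (x * z))) ∧
     (∀ x y z : A, circ y z * x = -(circ (y * x) z + circ y (z * x)))) ↔
    (∀ x y : A, (x * y) * x = x * (y * x)) := by
  rw [flexible_iff_forall_mul_mul_self_eq_zero h2 hanti, forall_mul_mul_self_eq_zero_iff h2]
  simp only [mul_circ_eq_iff hanti, circ_mul_eq_iff hanti, and_self]
  exact ⟨fun h x y z => h y x z, fun h y x z => h x y z⟩

/-- An antiassociative algebra over a field of characteristic ≠ 2 is an
ABD-algebra if and only if it is flexible. -/
theorem antiassoc_abd_iff_flexible {K A : Type*} [Field K] (h2 : (2 : K) ≠ 0)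
    [NonUnitalNonAssocRing A] [Module K A] [SMulCommClass K A A] [IsScalarTower K A A]
    (hanti : ∀ x y z : A, (x * y) * z + x * (y * z) = 0) :
    ((∀ x y z : A, x * circ y z = -(circ (x * y) z + circ y (x * z))) ∧
     (∀ x y z : A, circ y z * x = -(circ (y * x) z + circ y (z * x)))) ↔
    (∀ x y : A, (x * y) * x = x * (y * x)) :=
  antiassoc_abd_iff_flexible_general h2 hanti
end

section
/- Let A be an ALR-algebra, i.e., an algebra satisfying x·(y·z) + y·(x·z) = 0 and (x·y)·z + (x·z)·y = 0 for all x,y,z. Then the derived subspace is commutative and associative in the following sense: (x·y)·(z·t) = (z·t)·(x·y) and ((x·y)·(z·t))·(v·w) = (x·y)·((z·t)·(v·w)) for all x,y,z,t,v,w. -/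
/-!
Each defining identity says that swapping two factors changes the sign. Commutativity of
`(x * y) * (z * t)` comes from a chain of four such swaps (left, right, left, right), so the signs
cancel; associativity then follows from one right swap, commutativity, and one left swap.
-/

section ALR

variable {A : Type*} [NonUnitalNonAssocRing A]

theorem mul_mul_left_swap (hAL : ∀ x y z : A, x * (y * z) + y * (x * z) = 0) (x y z : A) :
    x * (y * z) = -(y * (x * z)) :=
  eq_neg_of_add_eq_zero_left (hAL x y z)

theorem mul_mul_right_swap (hAR : ∀ x y z : A, (x * y) * z + (x * z) * y = 0) (x y z : A) :
    (x * y) * z = -((x * z) * y) :=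
  eq_neg_of_add_eq_zero_left (hAR x y z)

theorem mul_mul_mul_comm_of_alr (hAL : ∀ x y z : A, x * (y * z) + y * (x * z) = 0)
    (hAR : ∀ x y z : A, (x * y) * z + (x * z) * y = 0) (x y z t : A) :
    (x * y) * (z * t) = (z * t) * (x * y) := by
  have L := mul_mul_left_swap hAL
  have R := mul_mul_right_swap hAR
  calc (x * y) * (z * t) = -(z * ((x * y) * t)) := L _ _ _
    _ = z * ((x * t) * y) := by rw [R x y t, mul_neg, neg_neg]
    _ = (x * (z * y)) * t := by rw [L z, R x t, neg_neg]
    _ = (z * t) * (x * y) := by rw [L x z y, neg_mul, R z, neg_neg]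

theorem mul_mul_mul_assoc_of_alr (hAL : ∀ x y z : A, x * (y * z) + y * (x * z) = 0)
    (hAR : ∀ x y z : A, (x * y) * z + (x * z) * y = 0) (x y z t v w : A) :
    ((x * y) * (z * t)) * (v * w) = (x * y) * ((z * t) * (v * w)) := by
  rw [mul_mul_right_swap hAR, mul_mul_mul_comm_of_alr hAL hAR (x * y) (v * w),
    ← mul_mul_left_swap hAL]

end ALR

/-- In an ALR-algebra the derived subspace is commutative and associative:
`(x·y)·(z·t) = (z·t)·(x·y)` and
`((x·y)·(z·t))·(v·w) = (x·y)·((z·t)·(v·w))`. -/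
theorem alr_derived_comm_assoc {A : Type*} [NonUnitalNonAssocRing A]
    (hAL : ∀ x y z : A, x * (y * z) + y * (x * z) = 0)
    (hAR : ∀ x y z : A, (x * y) * z + (x * z) * y = 0) :
    (∀ x y z t : A, (x * y) * (z * t) = (z * t) * (x * y)) ∧
    (∀ x y z t v w : A,
      ((x * y) * (z * t)) * (v * w) = (x * y) * ((z * t) * (v * w))) :=
  ⟨mul_mul_mul_comm_of_alr hAL hAR, mul_mul_mul_assoc_of_alr hAL hAR⟩
end

section
/- Let A be an ALR-algebra (x·(y·z) + y·(x·z) = 0 and (x·y)·z + (x·z)·y = 0) over a field of characteristic ≠ 2. Then (A, [·,·]) with [x,y] = x·y - y·x is a Lie algebra if and only if Σ_{σ∈A₃} (x_{σ(1)}, x_{σ(2)}, x_{σ(3)}) = 0 for all x₁, x₂, x₃ ∈ A, where (a,b,c) = (a·b)·c - a·(b·c). -/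
/-- Associator `(x,y,z) = (x·y)·z - x·(y·z)`. -/
def assoc {A : Type*} [Mul A] [Sub A] (x y z : A) : A := (x * y) * z - x * (y * z)

lemma alr_key {A : Type*} [NonUnitalNonAssocRing A]
    (hAL : ∀ x y z : A, x * (y * z) + y * (x * z) = 0)
    (hAR : ∀ x y z : A, (x * y) * z + (x * z) * y = 0) (x y z : A) :
    br (br x y) z + br (br y z) x + br (br z x) y =
      (assoc x y z + assoc y z x + assoc z x y) +
      (assoc x y z + assoc y z x + assoc z x y) := by
  have e1 : (y * x) * z = -((y * z) * x) := eq_neg_of_add_eq_zero_left (hAR y x z)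
  have e2 : (z * y) * x = -((z * x) * y) := eq_neg_of_add_eq_zero_left (hAR z y x)
  have e3 : (x * z) * y = -((x * y) * z) := eq_neg_of_add_eq_zero_left (hAR x z y)
  have f1 : z * (y * x) = -(y * (z * x)) := eq_neg_of_add_eq_zero_left (hAL z y x)
  have f2 : x * (z * y) = -(z * (x * y)) := eq_neg_of_add_eq_zero_left (hAL x z y)
  have f3 : y * (x * z) = -(x * (y * z)) := eq_neg_of_add_eq_zero_left (hAL y x z)
  simp only [br, assoc, mul_sub, sub_mul, e1, e2, e3, f1, f2, f3]
  abel

/-- For an ALR-algebra over a field of characteristic ≠ 2, the commutator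
bracket satisfies the Jacobi identity iff the sum over even permutations of
`{1,2,3}` of associators vanishes. -/
theorem alr_lie_iff {K A : Type*} [Field K] (h2 : (2 : K) ≠ 0)
    [NonUnitalNonAssocRing A] [Module K A] [SMulCommClass K A A] [IsScalarTower K A A]
    (hAL : ∀ x y z : A, x * (y * z) + y * (x * z) = 0)
    (hAR : ∀ x y z : A, (x * y) * z + (x * z) * y = 0) :
    (∀ x y z : A, br (br x y) z + br (br y z) x + br (br z x) y = 0) ↔
    (∀ x : Fin 3 → A,
      ∑ σ ∈ Finset.univ.filter (fun σ : Equiv.Perm (Fin 3) => Equiv.Perm.sign σ = 1),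
        assoc (x (σ 0)) (x (σ 1)) (x (σ 2)) = 0) := by
  have hset : (Finset.univ.filter (fun σ : Equiv.Perm (Fin 3) => Equiv.Perm.sign σ = 1)) =
      {1, finRotate 3, (finRotate 3)⁻¹} := by decide
  have hsum : ∀ x : Fin 3 → A,
      ∑ σ ∈ Finset.univ.filter (fun σ : Equiv.Perm (Fin 3) => Equiv.Perm.sign σ = 1),
        assoc (x (σ 0)) (x (σ 1)) (x (σ 2)) =
      assoc (x 0) (x 1) (x 2) + assoc (x 1) (x 2) (x 0) + assoc (x 2) (x 0) (x 1) := by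
    intro x
    rw [hset, Finset.sum_insert (by decide), Finset.sum_insert (by decide),
      Finset.sum_singleton]
    have a1 : (1 : Equiv.Perm (Fin 3)) 0 = 0 := rfl
    have a2 : (1 : Equiv.Perm (Fin 3)) 1 = 1 := rfl
    have a3 : (1 : Equiv.Perm (Fin 3)) 2 = 2 := rfl
    have b1 : finRotate 3 0 = 1 := by decide
    have b2 : finRotate 3 1 = 2 := by decide
    have b3 : finRotate 3 2 = 0 := by decide
    have c1 : (finRotate 3)⁻¹ 0 = 2 := by decide
    have c2 : (finRotate 3)⁻¹ 1 = 0 := by decide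
    have c3 : (finRotate 3)⁻¹ 2 = 1 := by decide
    rw [a1, a2, a3, b1, b2, b3, c1, c2, c3]
    abel
  constructor
  · intro h x
    rw [hsum]
    set S := assoc (x 0) (x 1) (x 2) + assoc (x 1) (x 2) (x 0) + assoc (x 2) (x 0) (x 1)
    have hSS : S + S = 0 := by
      rw [← alr_key hAL hAR (x 0) (x 1) (x 2)]
      exact h _ _ _
    have h2S : (2 : K) • S = 0 := by rw [two_smul]; exact hSS
    have := congrArg (fun a => (2 : K)⁻¹ • a) h2S
    simpa [smul_smul, inv_mul_cancel₀ h2] using this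
  · intro h x y z
    rw [alr_key hAL hAR]
    have := h ![x, y, z]
    rw [hsum] at this
    simpa using congrArg (fun a => a + a) this
end

section
/- Let A be an 𝒜flexible ABD-algebra over a field of characteristic zero, i.e., A satisfies (x·y)·z + x·(y·z) = (z·y)·x + z·(y·x) together with the ABD identities x·(y∘z) = -((x·y)∘z + y∘(x·z)) and (y∘z)·x = -((y·x)∘z + y∘(z·x)). Then x·(y·z) = (z·y)·x for all x,y,z; in particular A is flexible. -/
namespace ABDAlgebra

variable {A : Type*} [NonUnitalNonAssocRing A]

def antiassociator (x y z : A) : A := x * y * z + x * (y * z)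

theorem antiassociator_add_antiassociator_swap_right
    (h1 : ∀ x y z : A, x * circ y z = -(circ (x * y) z + circ y (x * z))) (x y z : A) :
    antiassociator x y z + antiassociator x z y = -(z * (x * y)) - y * (x * z) := by
  have h := h1 x y z
  simp only [antiassociator, circ, mul_add] at h ⊢
  linear_combination (norm := abel1) h

theorem antiassociator_add_antiassociator_swap_left
    (h2 : ∀ x y z : A, circ y z * x = -(circ (y * x) z + circ y (z * x))) (x y z : A) :
    antiassociator y z x + antiassociator z y x = -(y * x * z) - z * x * y := by
  have h := h2 x y z
  simp only [antiassociator, circ, add_mul] at h ⊢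
  linear_combination (norm := abel1) h

theorem mul_mul_add_mul_mul_eq
    (haflex : ∀ x y z : A, (x * y) * z + x * (y * z) = (z * y) * x + z * (y * x))
    (h1 : ∀ x y z : A, x * circ y z = -(circ (x * y) z + circ y (x * z)))
    (h2 : ∀ x y z : A, circ y z * x = -(circ (y * x) z + circ y (z * x))) (x y z : A) :
    x * (y * z) + z * (y * x) = z * y * x + x * y * z := by
  have hleft := antiassociator_add_antiassociator_swap_right h1 y z x
  have hright := antiassociator_add_antiassociator_swap_left h2 y z x
  simp only [antiassociator] at hleft hright
  linear_combination (norm := abel1) hleft - hright + haflex z x y + haflex x z y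

theorem two_nsmul_mul_mul_eq
    (haflex : ∀ x y z : A, (x * y) * z + x * (y * z) = (z * y) * x + z * (y * x))
    (h1 : ∀ x y z : A, x * circ y z = -(circ (x * y) z + circ y (x * z)))
    (h2 : ∀ x y z : A, circ y z * x = -(circ (y * x) z + circ y (z * x))) (x y z : A) :
    2 • (x * (y * z)) = 2 • (z * y * x) := by
  linear_combination (norm := abel1) mul_mul_add_mul_mul_eq haflex h1 h2 x y z + haflex x y z

end ABDAlgebra

theorem aflexible_abd_identity_general {K A : Type*} [Field K] [CharZero K]
    [NonUnitalNonAssocRing A] [Module K A]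
    (haflex : ∀ x y z : A, (x * y) * z + x * (y * z) = (z * y) * x + z * (y * x))
    (h1 : ∀ x y z : A, x * circ y z = -(circ (x * y) z + circ y (x * z)))
    (h2 : ∀ x y z : A, circ y z * x = -(circ (y * x) z + circ y (z * x))) :
    (∀ x y z : A, x * (y * z) = (z * y) * x) ∧
    (∀ x y : A, (x * y) * x = x * (y * x)) := by
  have key : ∀ x y z : A, x * (y * z) = (z * y) * x := fun x y z => by
    have h := ABDAlgebra.two_nsmul_mul_mul_eq haflex h1 h2 x y z
    rw [← ofNat_smul_eq_nsmul K, ← ofNat_smul_eq_nsmul K] at h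
    exact smul_right_injective A two_ne_zero h
  exact ⟨key, fun x y => (key x y x).symm⟩

/-- In an 𝒜flexible ABD-algebra over a field of characteristic zero,
`x·(y·z) = (z·y)·x`; in particular the algebra is flexible. -/
theorem aflexible_abd_identity {K A : Type*} [Field K] [CharZero K]
    [NonUnitalNonAssocRing A] [Module K A] [SMulCommClass K A A] [IsScalarTower K A A]
    (haflex : ∀ x y z : A, (x * y) * z + x * (y * z) = (z * y) * x + z * (y * x))
    (h1 : ∀ x y z : A, x * circ y z = -(circ (x * y) z + circ y (x * z)))
    (h2 : ∀ x y z : A, circ y z * x = -(circ (y * x) z + circ y (z * x))) :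
    (∀ x y z : A, x * (y * z) = (z * y) * x) ∧
    (∀ x y : A, (x * y) * x = x * (y * x)) :=
  aflexible_abd_identity_general (K := K) haflex h1 h2
end
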